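/- Let L̂_rad: ℝ → ℝ be continuous and symmetric with: (a) a zero of order γ₀ ∈ (n₀, n₀+1] at the origin, meaning |L̂_rad(ω)| ≥ c₀ |ω|^{γ₀} on a neighborhood [-R₀, R₀] of 0 for some c₀ > 0; (b) L̂_rad(ω) ≠ 0 for ω ≠ 0; and (c) |L̂_rad(ω)| ≥ C₁ |ω|^{γ₁} for |ω| > R₁ with γ₁ > 1. Fix t₀ ∈ ℝ and let κ̂: ℝ → [0,1] be continuous with κ̂ = 1 on [-1/2, 1/2] and κ̂ = 0 outside [-1, 1]. Then the function ν̂(ω) = (e^{-iωt₀} - ∑_{n=0}^{n₀} ((-it₀)^n/n!) ω^n κ̂(ω)) / L̂_rad(ω), extended by continuity at 0, belongs to L¹(ℝ) ∩ L²(ℝ). -/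

import Mathlib

open MeasureTheory Finset

/-!
Near the origin the numerator of `ν̂` is the Taylor remainder of `ω ↦ e^{-iωt₀}` of order `n₀`,
of size `O(|ω|^{n₀+1})`, which the zero of order `γ₀ ≤ n₀ + 1` of `L̂_rad` absorbs; away from the
origin `ν̂` is continuous, hence bounded on compact annuli; for large `|ω|` the cutoff vanishes and
`|ν̂(ω)| = 1/|L̂_rad(ω)| ≤ C|ω|^{-γ₁}`. So `|ν̂(ω)| ≤ A(1+|ω|)^{-γ₁}`, and since `γ₁ > 1` this
majorant lies in `L¹ ∩ L²`.
-/

section DecayBounds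

variable {E F : Type*} [NormedAddCommGroup E] [NormedAddCommGroup F]

theorem exists_norm_le_of_continuousOn_compl_zero [ProperSpace E] {f : E → F}
    (hf : ContinuousOn f {0}ᶜ) {δ M₀ : ℝ} (hδ : 0 < δ) (hnear : ∀ x, ‖x‖ ≤ δ → ‖f x‖ ≤ M₀)
    (R : ℝ) : ∃ M, ∀ x, ‖x‖ ≤ R → ‖f x‖ ≤ M := by
  have hK : IsCompact (Metric.closedBall (0 : E) R \ Metric.ball 0 δ) :=
    (isCompact_closedBall 0 R).diff Metric.isOpen_ball
  have hK0 : Metric.closedBall (0 : E) R \ Metric.ball 0 δ ⊆ {0}ᶜ := by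
    rintro x ⟨-, hx⟩ rfl
    exact hx (Metric.mem_ball_self hδ)
  obtain ⟨M₁, hM₁⟩ := hK.exists_bound_of_continuousOn (hf.mono hK0)
  refine ⟨max M₀ M₁, fun x hx => ?_⟩
  rcases le_or_gt ‖x‖ δ with hxδ | hxδ
  · exact (hnear x hxδ).trans (le_max_left _ _)
  · refine (hM₁ x ⟨mem_closedBall_zero_iff.2 hx, ?_⟩).trans (le_max_right _ _)
    simpa using hxδ.le

theorem exists_norm_le_mul_one_add_norm_rpow_neg {f : E → F} {R M C r : ℝ} (hr : 0 ≤ r)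
    (hnear : ∀ x, ‖x‖ ≤ R → ‖f x‖ ≤ M)
    (hfar : ∀ x, R < ‖x‖ → ‖f x‖ ≤ C * (1 + ‖x‖) ^ (-r)) :
    ∃ A, ∀ x, ‖f x‖ ≤ A * (1 + ‖x‖) ^ (-r) := by
  refine ⟨max (M * (1 + R) ^ r) C, fun x => ?_⟩
  have hpos : 0 < 1 + ‖x‖ := by positivity
  rcases le_or_gt ‖x‖ R with hx | hx
  · have hM : 0 ≤ M := (norm_nonneg _).trans (hnear x hx)
    calc ‖f x‖ ≤ M * (1 + ‖x‖) ^ r * (1 + ‖x‖) ^ (-r) := by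
          rw [mul_assoc, ← Real.rpow_add hpos, add_neg_cancel, Real.rpow_zero, mul_one]
          exact hnear x hx
      _ ≤ M * (1 + R) ^ r * (1 + ‖x‖) ^ (-r) := by gcongr
      _ ≤ _ := by gcongr; exact le_max_left _ _
  · exact (hfar x hx).trans (by gcongr; exact le_max_right _ _)

variable [NormedSpace ℝ E] [FiniteDimensional ℝ E] [MeasurableSpace E] [BorelSpace E]
  {μ : Measure E} [μ.IsAddHaarMeasure]

theorem memLp_one_add_norm_rpow_neg {p : ENNReal} (hp0 : p ≠ 0) (hp : p ≠ ⊤) {r : ℝ}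
    (hr : (Module.finrank ℝ E : ℝ) < p.toReal * r) :
    MemLp (fun x : E => (1 + ‖x‖) ^ (-r)) p μ := by
  refine (integrable_norm_rpow_iff (Measurable.aestronglyMeasurable (by fun_prop)) hp0 hp).1 ?_
  refine (integrable_one_add_norm (μ := μ) hr).congr (Filter.Eventually.of_forall fun x => ?_)
  have h0 : 0 ≤ 1 + ‖x‖ := by positivity
  simp only [Real.norm_eq_abs, abs_of_nonneg (Real.rpow_nonneg h0 _), ← Real.rpow_mul h0]
  ring_nf

theorem MemLp.of_norm_le_mul_one_add_norm_rpow_neg {f : E → F} (hf : AEStronglyMeasurable f μ)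
    {p : ENNReal} (hp0 : p ≠ 0) (hp : p ≠ ⊤) {A r : ℝ}
    (hr : (Module.finrank ℝ E : ℝ) < p.toReal * r) (hA : ∀ x, ‖f x‖ ≤ A * (1 + ‖x‖) ^ (-r)) :
    MemLp f p μ :=
  ((memLp_one_add_norm_rpow_neg hp0 hp hr).const_mul A).of_le hf
    (Filter.Eventually.of_forall fun x => (hA x).trans (Real.le_norm_self _))

end DecayBounds

noncomputable def cutoffTaylorRemainder (κ : ℝ → ℝ) (n : ℕ) (t₀ ω : ℝ) : ℂ :=
  Complex.exp (-Complex.I * ω * t₀) -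
    (κ ω : ℂ) * ∑ k ∈ range (n + 1), ((-Complex.I * t₀) ^ k / k.factorial) * (ω : ℂ) ^ k

namespace cutoffTaylorRemainder

variable {κ : ℝ → ℝ} {n : ℕ} {t₀ ω : ℝ}

theorem continuous (hκ : Continuous κ) : Continuous (cutoffTaylorRemainder κ n t₀) := by
  unfold cutoffTaylorRemainder
  fun_prop

theorem norm_le (hκ : κ ω = 1) (hω : |ω * t₀| ≤ 1) :
    ‖cutoffTaylorRemainder κ n t₀ ω‖ ≤ 2 * |t₀| ^ (n + 1) * |ω| ^ (n + 1) := by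
  set x : ℂ := -Complex.I * ω * t₀
  have hx : ‖x‖ = |ω * t₀| := by simp [x, abs_mul]
  have htaylor : cutoffTaylorRemainder κ n t₀ ω =
      Complex.exp x - ∑ k ∈ range (n + 1), x ^ k / k.factorial := by
    simp only [cutoffTaylorRemainder, hκ, Complex.ofReal_one, one_mul, x]
    congr 1
    refine sum_congr rfl fun k _ => ?_
    ring
  have hsmall : ‖x‖ / (n + 1).succ ≤ 1 / 2 := by
    rw [div_le_iff₀ (by positivity), hx]
    push_cast
    linarith
  calc ‖cutoffTaylorRemainder κ n t₀ ω‖ ≤ ‖x‖ ^ (n + 1) / (n + 1).factorial * 2 := by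
        rw [htaylor]; exact Complex.exp_bound' hsmall
    _ ≤ ‖x‖ ^ (n + 1) * 2 := by
        gcongr
        exact div_le_self (by positivity) (by exact_mod_cast (n + 1).factorial_pos)
    _ = 2 * |t₀| ^ (n + 1) * |ω| ^ (n + 1) := by rw [hx, abs_mul, mul_pow]; ring

theorem norm_of_eq_zero (hκ : κ ω = 0) : ‖cutoffTaylorRemainder κ n t₀ ω‖ = 1 := by
  simp [cutoffTaylorRemainder, hκ, Complex.norm_exp]

theorem exists_norm_div_le_near_zero {L : ℝ → ℝ} {γ R₀ c₀ : ℝ} (t₀ : ℝ) (hγ0 : 0 ≤ γ)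
    (hγ : γ ≤ n + 1) (hR₀ : 0 < R₀) (hc₀ : 0 < c₀)
    (hL : ∀ ω : ℝ, |ω| ≤ R₀ → c₀ * |ω| ^ γ ≤ |L ω|) (hκ : ∀ ω : ℝ, |ω| ≤ 1 / 2 → κ ω = 1) :
    ∃ δ > 0, ∀ ω : ℝ, |ω| ≤ δ →
      ‖cutoffTaylorRemainder κ n t₀ ω / L ω‖ ≤ 2 * |t₀| ^ (n + 1) / c₀ := by
  refine ⟨min R₀ (min (1 / 2) (|t₀| + 1)⁻¹), by positivity, fun ω hω => ?_⟩
  simp only [le_min_iff] at hω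
  obtain ⟨hωR₀, hωhalf, hωt₀⟩ := hω
  have hωt₀' : |ω * t₀| ≤ 1 := by
    rw [abs_mul]
    calc |ω| * |t₀| ≤ (|t₀| + 1)⁻¹ * (|t₀| + 1) := by gcongr; linarith
      _ = 1 := inv_mul_cancel₀ (by positivity)
  have hpow : |ω| ^ (n + 1) ≤ |ω| ^ γ := by
    rw [← Real.rpow_natCast]
    exact Real.rpow_le_rpow_of_exponent_ge' (abs_nonneg ω) (by linarith) hγ0
      (by push_cast; exact hγ)
  have hnum : ‖cutoffTaylorRemainder κ n t₀ ω‖ ≤ 2 * |t₀| ^ (n + 1) * |ω| ^ γ :=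
    (norm_le (hκ ω hωhalf) hωt₀').trans (by gcongr)
  have hden := hL ω hωR₀
  rw [norm_div, Complex.norm_real, Real.norm_eq_abs]
  -- `L` may vanish at the origin, where `x / 0 = 0`.
  rcases (abs_nonneg (L ω)).eq_or_lt with h | h
  · rw [← h, div_zero]
    positivity
  · rw [div_le_div_iff₀ h hc₀]
    calc ‖cutoffTaylorRemainder κ n t₀ ω‖ * c₀ ≤ 2 * |t₀| ^ (n + 1) * (c₀ * |ω| ^ γ) := by
          nlinarith
      _ ≤ 2 * |t₀| ^ (n + 1) * |L ω| := by gcongr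

theorem norm_div_le_of_elliptic {L : ℝ → ℝ} {C γ : ℝ} (hC : 0 < C) (hγ : 0 ≤ γ)
    (hκ : κ ω = 0) (hω : 1 ≤ |ω|) (hL : C * |ω| ^ γ ≤ |L ω|) :
    ‖cutoffTaylorRemainder κ n t₀ ω / L ω‖ ≤ 2 ^ γ / C * (1 + |ω|) ^ (-γ) := by
  have hdouble : (1 + |ω|) ^ γ ≤ 2 ^ γ * |ω| ^ γ := by
    rw [← Real.mul_rpow (by norm_num) (abs_nonneg ω)]
    gcongr
    linarith
  have hL' : C * (2 ^ γ)⁻¹ * (1 + |ω|) ^ γ ≤ C * |ω| ^ γ := by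
    rw [mul_assoc]
    gcongr
    rwa [inv_mul_le_iff₀ (by positivity)]
  rw [norm_div, norm_of_eq_zero hκ, Complex.norm_real, Real.norm_eq_abs,
    Real.rpow_neg (by positivity)]
  calc 1 / |L ω| ≤ 1 / (C * (2 ^ γ)⁻¹ * (1 + |ω|) ^ γ) := by gcongr; exact hL'.trans hL
    _ = 2 ^ γ / C * ((1 + |ω|) ^ γ)⁻¹ := by field_simp

end cutoffTaylorRemainder

theorem radon_basis_function_L1_L2_general
    (Lrad : ℝ → ℝ) (hLcont : Continuous Lrad)
    (n₀ : ℕ) (γ₀ : ℝ) (hγ₀ : (n₀ : ℝ) < γ₀ ∧ γ₀ ≤ (n₀ : ℝ) + 1)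
    (R₀ c₀ : ℝ) (hR₀ : 0 < R₀) (hc₀ : 0 < c₀)
    (hzero : ∀ ω : ℝ, |ω| ≤ R₀ → c₀ * |ω| ^ γ₀ ≤ |Lrad ω|)
    (hnonvanish : ∀ ω : ℝ, ω ≠ 0 → Lrad ω ≠ 0)
    (C₁ R₁ γ₁ : ℝ) (hC₁ : 0 < C₁) (hγ₁ : 1 < γ₁)
    (hell : ∀ ω : ℝ, R₁ < |ω| → C₁ * |ω| ^ γ₁ ≤ |Lrad ω|)
    (κ : ℝ → ℝ) (hκcont : Continuous κ)
    (hκone : ∀ ω : ℝ, |ω| ≤ 1 / 2 → κ ω = 1)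
    (hκzero : ∀ ω : ℝ, 1 ≤ |ω| → κ ω = 0)
    (t₀ : ℝ)
    (νhat : ℝ → ℂ)
    (hνhat : ∀ ω : ℝ, νhat ω =
      (Complex.exp (-Complex.I * ω * t₀) -
        (κ ω : ℂ) * ∑ n ∈ Finset.range (n₀ + 1),
          ((-Complex.I * t₀) ^ n / n.factorial) * (ω : ℂ) ^ n) / (Lrad ω : ℂ)) :
    Integrable νhat ∧ MemLp νhat 2 volume := by
  suffices h : ∀ p : ENNReal, p ≠ 0 → p ≠ ⊤ → 1 ≤ p.toReal → MemLp νhat p volume from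
    ⟨memLp_one_iff_integrable.1 (h 1 one_ne_zero ENNReal.one_ne_top (by simp)),
      h 2 two_ne_zero ENNReal.ofNat_ne_top (by simp)⟩
  intro p hp0 hp hp1
  obtain rfl : νhat = fun ω => cutoffTaylorRemainder κ n₀ t₀ ω / Lrad ω := funext hνhat
  have hN := cutoffTaylorRemainder.continuous (n := n₀) (t₀ := t₀) hκcont
  have hL : Continuous fun ω => (Lrad ω : ℂ) := Complex.continuous_ofReal.comp hLcont
  have hγ₁0 : 0 ≤ γ₁ := by linarith
  obtain ⟨δ, hδ, hnear⟩ := cutoffTaylorRemainder.exists_norm_div_le_near_zero t₀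
    ((Nat.cast_nonneg n₀).trans hγ₀.1.le) hγ₀.2 hR₀ hc₀ hzero hκone
  obtain ⟨M, hM⟩ := exists_norm_le_of_continuousOn_compl_zero
    (hN.continuousOn.div hL.continuousOn fun ω hω => Complex.ofReal_ne_zero.2 (hnonvanish ω hω))
    hδ hnear (max R₁ 1)
  obtain ⟨A, hA⟩ := exists_norm_le_mul_one_add_norm_rpow_neg hγ₁0 hM fun ω hω => by
    rw [Real.norm_eq_abs, max_lt_iff] at hω
    exact cutoffTaylorRemainder.norm_div_le_of_elliptic hC₁ hγ₁0 (hκzero ω hω.2.le) hω.2.le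
      (hell ω hω.1)
  refine MemLp.of_norm_le_mul_one_add_norm_rpow_neg
    (hN.measurable.div hL.measurable).aestronglyMeasurable hp0 hp ?_ hA
  rw [Module.finrank_self, Nat.cast_one]
  nlinarith

/-- The (Fourier-domain) Radon basis function
`ν̂(ω) = (e^{-iωt₀} - κ̂(ω) ∑_{n=0}^{n₀} ((-it₀)^n/n!) ω^n) / L̂_rad(ω)` belongs to
`L¹(ℝ) ∩ L²(ℝ)`, under the admissibility conditions on `L̂_rad`: a zero of order
`γ₀ ∈ (n₀, n₀+1]` at the origin, no other zeros, and ellipticity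
`|L̂_rad(ω)| ≥ C₁|ω|^{γ₁}` with `γ₁ > 1` at infinity; `κ̂` is a continuous cutoff with
values in `[0,1]`, equal to `1` on `[-1/2,1/2]` and to `0` outside `[-1,1]`. -/
theorem radon_basis_function_L1_L2
    (Lrad : ℝ → ℝ) (hLcont : Continuous Lrad) (hLsym : ∀ ω, Lrad (-ω) = Lrad ω)
    (n₀ : ℕ) (γ₀ : ℝ) (hγ₀ : (n₀ : ℝ) < γ₀ ∧ γ₀ ≤ (n₀ : ℝ) + 1)
    (R₀ c₀ : ℝ) (hR₀ : 0 < R₀) (hc₀ : 0 < c₀)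
    (hzero : ∀ ω : ℝ, |ω| ≤ R₀ → c₀ * |ω| ^ γ₀ ≤ |Lrad ω|)
    (hnonvanish : ∀ ω : ℝ, ω ≠ 0 → Lrad ω ≠ 0)
    (C₁ R₁ γ₁ : ℝ) (hC₁ : 0 < C₁) (hR₁ : 0 < R₁) (hγ₁ : 1 < γ₁)
    (hell : ∀ ω : ℝ, R₁ < |ω| → C₁ * |ω| ^ γ₁ ≤ |Lrad ω|)
    (κ : ℝ → ℝ) (hκcont : Continuous κ) (hκ01 : ∀ ω, 0 ≤ κ ω ∧ κ ω ≤ 1)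
    (hκone : ∀ ω : ℝ, |ω| ≤ 1 / 2 → κ ω = 1)
    (hκzero : ∀ ω : ℝ, 1 ≤ |ω| → κ ω = 0)
    (t₀ : ℝ)
    (νhat : ℝ → ℂ)
    (hνhat : ∀ ω : ℝ, νhat ω =
      (Complex.exp (-Complex.I * ω * t₀) -
        (κ ω : ℂ) * ∑ n ∈ Finset.range (n₀ + 1),
          ((-Complex.I * t₀) ^ n / n.factorial) * (ω : ℂ) ^ n) / (Lrad ω : ℂ)) :
    Integrable νhat ∧ MemLp νhat 2 volume :=
  radon_basis_function_L1_L2_general Lrad hLcont n₀ γ₀ hγ₀ R₀ c₀ hR₀ hc₀ hzero hnonvanish C₁ R₁ γ₁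
    hC₁ hγ₁ hell κ hκcont hκone hκzero t₀ νhat hνhat
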